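/- arXiv:2504.19780 — 4 statements merged into one kernel-verified Lean document; each statement's English description precedes it below -/
import Mathlib

section
/- Let f : ℝⁿ → ℝ be a symmetric (permutation-invariant) strictly quasi-convex function. Then f is strictly Schur-convex: if u is majorized by v and u is not a rearrangement of v, then f(u) < f(v). -/
open Finset

/-- Decreasing rearrangement of a vector in ℝⁿ. -/
noncomputable def dsort {n : ℕ} (u : Fin n → ℝ) : Fin n → ℝ :=
  u ∘ Tuple.sort (fun i => -u i)

/-- `Maj u v` : `u` is majorized by `v`. -/
def Maj {n : ℕ} (u v : Fin n → ℝ) : Prop :=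
  (∀ k : ℕ, ∑ i ∈ univ.filter (fun i : Fin n => (i : ℕ) < k), dsort u i ≤
      ∑ i ∈ univ.filter (fun i : Fin n => (i : ℕ) < k), dsort v i) ∧
  ∑ i, u i = ∑ i, v i

/-- Partial sum of the first `k` coordinates. -/
noncomputable def psum {n : ℕ} (w : Fin n → ℝ) (k : ℕ) : ℝ :=
  ∑ i ∈ univ.filter (fun i : Fin n => (i : ℕ) < k), w i

lemma filter_succ {n : ℕ} (a : Fin n) :
    univ.filter (fun i : Fin n => (i : ℕ) < (a : ℕ) + 1)
      = insert a (univ.filter (fun i : Fin n => (i : ℕ) < (a : ℕ))) := by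
  ext i
  simp only [mem_filter, mem_univ, true_and, mem_insert, Nat.lt_succ_iff_lt_or_eq]
  constructor
  · rintro (h | h)
    · exact Or.inr h
    · exact Or.inl (Fin.ext h)
  · rintro (h | h)
    · exact Or.inr (by rw [h])
    · exact Or.inl h

lemma psum_succ {n : ℕ} (w : Fin n → ℝ) (a : Fin n) :
    psum w ((a : ℕ) + 1) = psum w (a : ℕ) + w a := by
  unfold psum
  rw [filter_succ, sum_insert (by simp)]
  ring

lemma key {n : ℕ} (f : (Fin n → ℝ) → ℝ)
    (hsymm : ∀ (σ : Equiv.Perm (Fin n)) (u : Fin n → ℝ), f (u ∘ σ) = f u)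
    (hqc : ∀ u v : Fin n → ℝ, u ≠ v → ∀ α : ℝ, 0 < α → α < 1 →
      f (α • u + (1 - α) • v) < max (f u) (f v)) :
    ∀ N : ℕ, ∀ u v : Fin n → ℝ, Antitone u → Antitone v →
      (∀ k : ℕ, psum u k ≤ psum v k) → (∑ i, u i = ∑ i, v i) → u ≠ v →
      (univ.filter fun i => u i ≠ v i).card ≤ N → f u < f v := by
  intro N
  induction N with
  | zero =>
    intro u v _ _ _ _ hne hcard
    exfalso
    apply hne
    funext i
    by_contra h
    have : i ∈ univ.filter fun i => u i ≠ v i := by simp [h]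
    have := Finset.card_pos.mpr ⟨i, this⟩
    omega
  | succ N ih =>
    intro u v hu hv hS hsum hne hcard
    -- there is an index where u > v
    have hex : ∃ k, v k < u k := by
      by_contra h
      push_neg at h
      apply hne
      funext i
      exact (Finset.sum_eq_sum_iff_of_le (fun i _ => h i)).mp hsum i (mem_univ i)
    -- smallest such index k
    set T : Finset (Fin n) := univ.filter (fun i => v i < u i) with hT
    have hTne : T.Nonempty := by
      obtain ⟨k, hk⟩ := hex
      exact ⟨k, by simp [hT, hk]⟩
    set k : Fin n := T.min' hTne with hkdef
    have hk : v k < u k := by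
      have := T.min'_mem hTne
      simpa [hT] using this
    have hlek : ∀ i, i < k → u i ≤ v i := by
      intro i hi
      by_contra h
      push_neg at h
      exact absurd (T.min'_le i (by simp [hT, h])) (not_le.mpr hi)
    -- strict partial sum inequality just before k
    have hklt : psum u (k : ℕ) < psum v (k : ℕ) := by
      have h1 := hS ((k : ℕ) + 1)
      rw [psum_succ u k, psum_succ v k] at h1
      linarith
    -- largest index j < k with u j < v j
    set J : Finset (Fin n) := univ.filter (fun i => i < k ∧ u i < v i) with hJ
    have hJne : J.Nonempty := by
      by_contra h
      rw [Finset.not_nonempty_iff_eq_empty] at h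
      have heq : ∀ i ∈ univ.filter (fun i : Fin n => (i : ℕ) < (k : ℕ)), u i = v i := by
        intro i hi
        simp only [mem_filter, mem_univ, true_and] at hi
        have hik : i < k := hi
        have h2 : ¬ (u i < v i) := by
          intro hlt
          have : i ∈ J := by simp [hJ, hik, hlt]
          simp [h] at this
        linarith [hlek i hik]
      have : psum u (k : ℕ) = psum v (k : ℕ) := Finset.sum_congr rfl heq
      linarith
    set j : Fin n := J.max' hJne with hjdef
    have hj : j < k ∧ u j < v j := by
      have h : j ∈ univ.filter (fun i => i < k ∧ u i < v i) := J.max'_mem hJne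
      exact (mem_filter.mp h).2
    have hmid : ∀ i, j < i → i < k → u i = v i := by
      intro i h1 h2
      refine le_antisymm (hlek i h2) (le_of_not_gt fun h => ?_)
      exact absurd (J.le_max' i (by simp [hJ, h2, h])) (not_le.mpr h1)
    -- the transfer
    set δ : ℝ := min (v j - u j) (u k - v k) with hδdef
    have hδ : 0 < δ := lt_min (by linarith [hj.2]) (by linarith)
    have hδj : δ ≤ v j - u j := min_le_left _ _
    have hδk : δ ≤ u k - v k := min_le_right _ _
    have hjk : u k ≤ u j := hu hj.1.le
    have hchain : v k + δ ≤ v j - δ := by linarith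
    have hjnek : j ≠ k := ne_of_lt hj.1
    set v' : Fin n → ℝ := fun i => if i = j then v j - δ else if i = k then v k + δ else v i
      with hv'def
    have hv'j : v' j = v j - δ := by simp [hv'def]
    have hv'k : v' k = v k + δ := by simp [hv'def, hjnek.symm]
    have hv'other : ∀ i, i ≠ j → i ≠ k → v' i = v i := by
      intro i h1 h2; simp [hv'def, h1, h2]
    -- v' is antitone
    have hv' : Antitone v' := by
      intro a b hab
      rcases eq_or_lt_of_le hab with rfl | hab
      · exact le_refl _
      by_cases haj : a = j
      · subst haj
        by_cases hbk : b = k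
        · subst hbk; rw [hv'j, hv'k]; linarith
        · have hbj : b ≠ j := ne_of_gt hab
          rw [hv'other b hbj hbk, hv'j]
          by_cases hbk2 : b < k
          · have := hmid b hab hbk2
            have := hu hab.le
            linarith
          · have hkb : k ≤ b := le_of_not_gt hbk2
            have := hv hkb
            linarith
      · by_cases hbj : b = j
        · subst hbj
          have hak : a ≠ k := ne_of_lt (lt_trans hab hj.1)
          rw [hv'other a haj hak, hv'j]
          have := hv hab.le
          linarith
        · by_cases hak : a = k
          · subst hak
            have hbk : b ≠ k := ne_of_gt hab
            rw [hv'other b hbj hbk, hv'k]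
            have := hv hab.le
            linarith
          · by_cases hbk : b = k
            · subst hbk
              rw [hv'other a haj hak, hv'k]
              by_cases haj2 : j < a
              · have := hmid a haj2 hab
                have := hu hab.le
                linarith
              · have haj3 : a ≤ j := le_of_not_gt haj2
                have := hv haj3
                linarith
            · rw [hv'other a haj hak, hv'other b hbj hbk]
              exact hv hab.le
    -- sum formula for v'
    have hv'eq : ∀ i, v' i = v i + ((if i = j then -δ else 0) + (if i = k then δ else 0)) := by
      intro i
      by_cases h1 : i = j
      · subst h1; simp [hv'j, hjnek]; ring
      · by_cases h2 : i = k
        · subst h2; simp [hv'k, h1]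
        · simp [hv'other i h1 h2, h1, h2]
    have hsum_v' : ∀ F : Finset (Fin n), ∑ i ∈ F, v' i
        = ∑ i ∈ F, v i + ((if j ∈ F then -δ else 0) + (if k ∈ F then δ else 0)) := by
      intro F
      rw [Finset.sum_congr rfl (fun i _ => hv'eq i), Finset.sum_add_distrib,
        Finset.sum_add_distrib, Finset.sum_ite_eq' F j (fun _ => -δ),
        Finset.sum_ite_eq' F k (fun _ => δ)]
    -- total sum preserved
    have hsum' : ∑ i, u i = ∑ i, v' i := by
      rw [hsum, hsum_v' univ]
      simp
    -- partial sums
    have hS' : ∀ m : ℕ, psum u m ≤ psum v' m := by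
      intro m
      show psum u m ≤ ∑ i ∈ univ.filter (fun i : Fin n => (i : ℕ) < m), v' i
      rw [hsum_v']
      have hjm_iff : j ∈ univ.filter (fun i : Fin n => (i : ℕ) < m) ↔ (j : ℕ) < m := by simp
      have hkm_iff : k ∈ univ.filter (fun i : Fin n => (i : ℕ) < m) ↔ (k : ℕ) < m := by simp
      by_cases hkm : (k : ℕ) < m
      · have hjm : (j : ℕ) < m := lt_trans hj.1 hkm
        rw [if_pos (hjm_iff.mpr hjm), if_pos (hkm_iff.mpr hkm)]
        have h := hS m
        unfold psum at h ⊢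
        linarith
      · rw [if_neg (fun h => hkm (hkm_iff.mp h))]
        by_cases hjm : (j : ℕ) < m
        · rw [if_pos (hjm_iff.mpr hjm)]
          -- hard case: psum u m ≤ psum v m - δ
          have hmk : m ≤ (k : ℕ) := le_of_not_gt hkm
          have hkey : psum u m - psum v m ≤ -δ := by
            have hsubset : univ.filter (fun i : Fin n => (i : ℕ) < (j : ℕ) + 1)
                ⊆ univ.filter (fun i : Fin n => (i : ℕ) < m) := by
              intro i hi
              simp only [mem_filter, mem_univ, true_and] at hi ⊢
              omega
            have hsplit : ∑ i ∈ univ.filter (fun i : Fin n => (i : ℕ) < m), (u i - v i)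
                = (∑ i ∈ univ.filter (fun i : Fin n => (i : ℕ) < (j : ℕ) + 1), (u i - v i))
                  + ∑ i ∈ univ.filter (fun i : Fin n => (i : ℕ) < m)
                      \ univ.filter (fun i : Fin n => (i : ℕ) < (j : ℕ) + 1), (u i - v i) := by
              rw [add_comm]
              exact (Finset.sum_sdiff hsubset).symm
            have hzero : ∑ i ∈ univ.filter (fun i : Fin n => (i : ℕ) < m)
                \ univ.filter (fun i : Fin n => (i : ℕ) < (j : ℕ) + 1), (u i - v i) = 0 := by
              apply Finset.sum_eq_zero
              intro i hi
              simp only [mem_sdiff, mem_filter, mem_univ, true_and, not_lt] at hi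
              have hji : j < i := by
                have : (j : ℕ) < (i : ℕ) := by omega
                exact this
              have hik : i < k := by
                have : (i : ℕ) < (k : ℕ) := by omega
                exact this
              rw [hmid i hji hik]; ring
            have hfirst : ∑ i ∈ univ.filter (fun i : Fin n => (i : ℕ) < (j : ℕ) + 1), (u i - v i)
                = (psum u (j : ℕ) - psum v (j : ℕ)) + (u j - v j) := by
              rw [filter_succ, sum_insert (by simp)]
              unfold psum
              rw [Finset.sum_sub_distrib]
              ring
            have hSj := hS (j : ℕ)
            have : psum u m - psum v m
                = ∑ i ∈ univ.filter (fun i : Fin n => (i : ℕ) < m), (u i - v i) := by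
              unfold psum; rw [Finset.sum_sub_distrib]
            rw [this, hsplit, hzero, hfirst]
            linarith
          unfold psum at hkey ⊢
          linarith
        · rw [if_neg (fun h => hjm (hjm_iff.mp h))]
          have := hS m
          unfold psum at this ⊢
          linarith
    -- f v' < f v via strict quasiconvexity
    have hc : (0:ℝ) < v j - v k := by linarith
    have hc0 : v j - v k ≠ 0 := ne_of_gt hc
    set α : ℝ := 1 - δ / (v j - v k) with hαdef
    have hα0 : 0 < α := by
      have h : δ / (v j - v k) < 1 := (div_lt_one hc).mpr (by linarith)
      rw [hαdef]
      linarith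
    have hα1 : α < 1 := by
      have h : 0 < δ / (v j - v k) := div_pos hδ hc
      rw [hαdef]
      linarith
    set w : Fin n → ℝ := v ∘ (Equiv.swap j k) with hwdef
    have hwv : f w = f v := hsymm _ v
    have hvw : v ≠ w := by
      intro h
      have := congrFun h j
      simp [hwdef, Equiv.swap_apply_left] at this
      linarith
    have hcomb : α • v + (1 - α) • w = v' := by
      funext i
      simp only [Pi.add_apply, Pi.smul_apply, smul_eq_mul]
      by_cases h1 : i = j
      · subst h1
        rw [hv'j]
        have : w j = v k := by simp [hwdef, Equiv.swap_apply_left]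
        rw [this, hαdef]
        field_simp
        ring
      · by_cases h2 : i = k
        · subst h2
          rw [hv'k]
          have : w k = v j := by simp [hwdef, Equiv.swap_apply_right]
          rw [this, hαdef]
          field_simp
          ring
        · rw [hv'other i h1 h2]
          have : w i = v i := by simp [hwdef, Equiv.swap_apply_of_ne_of_ne h1 h2]
          rw [this]; ring
    have hlt : f v' < f v := by
      have := hqc v w hvw α hα0 hα1
      rw [hwv, max_self, hcomb] at this
      exact this
    -- cardinality decreases
    have hsub : (univ.filter fun i => u i ≠ v' i) ⊆ (univ.filter fun i => u i ≠ v i) := by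
      intro i hi
      simp only [mem_filter, mem_univ, true_and] at hi ⊢
      by_cases h1 : i = j
      · subst h1; exact ne_of_lt hj.2
      · by_cases h2 : i = k
        · subst h2; exact ne_of_gt hk
        · rwa [hv'other i h1 h2] at hi
    have hssub : (univ.filter fun i => u i ≠ v' i) ⊂ (univ.filter fun i => u i ≠ v i) := by
      rw [Finset.ssubset_iff_of_subset hsub]
      rcases le_total (v j - u j) (u k - v k) with h | h
      · refine ⟨j, by simp [ne_of_lt hj.2], ?_⟩
        simp only [mem_filter, mem_univ, true_and, not_not]
        rw [hv'j, hδdef, min_eq_left h]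
        ring
      · refine ⟨k, by simp [ne_of_gt hk], ?_⟩
        simp only [mem_filter, mem_univ, true_and, not_not]
        rw [hv'k, hδdef, min_eq_right h]
        ring
    have hcard' : (univ.filter fun i => u i ≠ v' i).card ≤ N := by
      have := Finset.card_lt_card hssub
      omega
    by_cases huv' : u = v'
    · rw [huv']; exact hlt
    · exact lt_trans (ih u v' hu hv' hS' hsum' huv' hcard') hlt

theorem stmt2 {n : ℕ} (f : (Fin n → ℝ) → ℝ)
    (hsymm : ∀ (σ : Equiv.Perm (Fin n)) (u : Fin n → ℝ), f (u ∘ σ) = f u)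
    (hqc : ∀ u v : Fin n → ℝ, u ≠ v → ∀ α : ℝ, 0 < α → α < 1 →
      f (α • u + (1 - α) • v) < max (f u) (f v))
    (u v : Fin n → ℝ) (hmaj : Maj u v) (hne : dsort u ≠ dsort v) :
    f u < f v := by
  have h1 : f (dsort u) = f u := hsymm _ u
  have h2 : f (dsort v) = f v := hsymm _ v
  have hanti : ∀ z : Fin n → ℝ, Antitone (dsort z) := by
    intro z a b hab
    have h := Tuple.monotone_sort (fun i => -z i) hab
    simp only [Function.comp_apply, neg_le_neg_iff] at h
    exact h
  have hsu : ∑ i, dsort u i = ∑ i, u i := Equiv.sum_comp _ u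
  have hsv : ∑ i, dsort v i = ∑ i, v i := Equiv.sum_comp _ v
  rw [← h1, ← h2]
  exact key f hsymm hqc _ (dsort u) (dsort v) (hanti u) (hanti v) hmaj.1
    (by rw [hsu, hsv, hmaj.2]) hne le_rfl
end

section
/- Let λ ∈ ℝⁿ with λ₁ ≥ ⋯ ≥ λₙ. Define κᵢ(λ) = λᵢ/λ_{n−i+1} for i = 1,…,⌊n/2⌋ and κ_{‖·‖}(λ) = ‖(κ₁(λ),…,κ_{⌊n/2⌋}(λ))‖₂ (Euclidean norm). If u, v ∈ ℝⁿ are vectors with strictly positive entries sorted in decreasing order and u ≺ v, then κ_{‖·‖}(u) ≤ κ_{‖·‖}(v). -/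
open Finset

/-- The condition vector of `u`: ratios of the `i`-th and `(n-i+1)`-th largest entries. -/
noncomputable def condVec {n : ℕ} (u : Fin n → ℝ) (i : Fin (n / 2)) : ℝ :=
  dsort u ⟨i, i.2.trans_le (Nat.div_le_self n 2)⟩ /
    dsort u ⟨n - 1 - i, by have := i.2; omega⟩

/-- Euclidean norm of the condition vector. -/
noncomputable def condNorm {n : ℕ} (u : Fin n → ℝ) : ℝ :=
  Real.sqrt (∑ i, condVec u i ^ 2)

/-- Abel-summation positivity: decreasing nonnegative coefficients times a sequence with
nonnegative prefix sums has a nonnegative weighted sum. -/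
lemma abel_nonneg : ∀ (m : ℕ) (c d : ℕ → ℝ),
    (∀ i j, i ≤ j → j < m → c j ≤ c i) → (∀ i, i < m → 0 ≤ c i) →
    (∀ k, k ≤ m → 0 ≤ ∑ i ∈ Finset.range k, d i) →
    0 ≤ ∑ i ∈ Finset.range m, c i * d i := by
  intro m
  induction m with
  | zero => intro c d _ _ _; simp
  | succ m ih =>
    intro c d hc hc0 hd
    have key : ∑ i ∈ Finset.range (m+1), c i * d i
        = ∑ i ∈ Finset.range m, (c i - c m) * d i + c m * ∑ i ∈ Finset.range (m+1), d i := by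
      simp only [sub_mul, Finset.sum_sub_distrib, Finset.sum_range_succ, Finset.mul_sum, mul_add]
      ring
    rw [key]
    have h1 : 0 ≤ ∑ i ∈ Finset.range m, (c i - c m) * d i := by
      apply ih
      · intro i j hij hj; have := hc i j hij (by omega); linarith
      · intro i hi; have := hc i m (by omega) (by omega); linarith
      · intro k hk; exact hd k (by omega)
    have h2 : 0 ≤ c m * ∑ i ∈ Finset.range (m+1), d i :=
      mul_nonneg (hc0 m (by omega)) (hd (m+1) le_rfl)
    linarith

lemma dsort_eq_self {n : ℕ} {u : Fin n → ℝ} (h : Antitone u) : dsort u = u := by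
  have hm : Monotone (fun i => -u i) := fun i j hij => neg_le_neg (h hij)
  have key := (Tuple.comp_sort_eq_comp_iff_monotone (f := fun i => -u i)
      (σ := Equiv.refl (Fin n))).2 (by simpa using hm)
  funext i
  have h2 := congrFun key i
  simp only [Function.comp_apply, Equiv.refl_apply, neg_inj] at h2
  simpa [dsort] using h2.symm

lemma inv_sub_inv'' {x y : ℝ} (hx : x ≠ 0) (hy : y ≠ 0) :
    y⁻¹ - x⁻¹ = (x * y)⁻¹ * (x - y) := by
  rw [inv_sub_inv hy hx, div_eq_mul_inv, mul_comm y x, mul_comm]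

lemma filter_sum_eq {n : ℕ} (k : ℕ) (hk : k ≤ n) (f : Fin n → ℝ) (g : ℕ → ℝ)
    (hfg : ∀ j (h : j < n), g j = f ⟨j, h⟩) :
    ∑ i ∈ univ.filter (fun i : Fin n => (i : ℕ) < k), f i = ∑ j ∈ Finset.range k, g j := by
  rw [Finset.sum_filter]
  have h1 : ∀ i : Fin n, (if (i : ℕ) < k then f i else 0)
      = (fun j => if j < k then g j else 0) (i : ℕ) := by
    intro i
    by_cases h : (i : ℕ) < k
    · simp [h, hfg i.1 i.2]
    · simp [h]
  rw [Finset.sum_congr rfl (fun i _ => h1 i),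
    Fin.sum_univ_eq_sum_range (fun j => if j < k then g j else 0) n, ← Finset.sum_filter]
  congr 1
  ext j
  simp only [Finset.mem_filter, Finset.mem_range]
  omega

theorem stmt5 {n : ℕ} (u v : Fin n → ℝ)
    (hupos : ∀ i, 0 < u i) (hvpos : ∀ i, 0 < v i)
    (husort : Antitone u) (hvsort : Antitone v)
    (hmaj : Maj u v) : condNorm u ≤ condNorm v := by
  have hds_u : dsort u = u := dsort_eq_self husort
  have hds_v : dsort v = v := dsort_eq_self hvsort
  rcases Nat.eq_zero_or_pos n with hn | hn
  · subst hn
    simp [condNorm]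
  set m := n / 2 with hm
  have hmn : m ≤ n := Nat.div_le_self n 2
  -- extended sequences
  set a : ℕ → ℝ := fun j => if h : j < n then u ⟨j, h⟩ else 1 with ha
  set b : ℕ → ℝ := fun j => if h : j < n then v ⟨j, h⟩ else 1 with hb
  have hag : ∀ j (h : j < n), a j = u ⟨j, h⟩ := fun j h => dif_pos h
  have hbg : ∀ j (h : j < n), b j = v ⟨j, h⟩ := fun j h => dif_pos h
  have hapos : ∀ j, 0 < a j := by
    intro j; by_cases h : j < n
    · rw [hag j h]; exact hupos _
    · simp [ha, h]
  have hbpos : ∀ j, 0 < b j := by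
    intro j; by_cases h : j < n
    · rw [hbg j h]; exact hvpos _
    · simp [hb, h]
  have hamono : ∀ i j, i ≤ j → j < n → a j ≤ a i := by
    intro i j hij hj
    rw [hag j hj, hag i (lt_of_le_of_lt hij hj)]
    exact husort (by exact hij)
  have hbmono : ∀ i j, i ≤ j → j < n → b j ≤ b i := by
    intro i j hij hj
    rw [hbg j hj, hbg i (lt_of_le_of_lt hij hj)]
    exact hvsort (by exact hij)
  -- majorization in ℕ form
  have H1 : ∀ k, k ≤ n → ∑ j ∈ Finset.range k, a j ≤ ∑ j ∈ Finset.range k, b j := by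
    intro k hk
    have h := hmaj.1 k
    rw [hds_u, hds_v, filter_sum_eq k hk u a hag, filter_sum_eq k hk v b hbg] at h
    exact h
  have H2 : ∑ j ∈ Finset.range n, a j = ∑ j ∈ Finset.range n, b j := by
    have h := hmaj.2
    have hu : ∑ i, u i = ∑ j ∈ Finset.range n, a j := by
      rw [← Fin.sum_univ_eq_sum_range a n]
      exact Finset.sum_congr rfl (fun i _ => (hag i.1 i.2).symm)
    have hv : ∑ i, v i = ∑ j ∈ Finset.range n, b j := by
      rw [← Fin.sum_univ_eq_sum_range b n]
      exact Finset.sum_congr rfl (fun i _ => (hbg i.1 i.2).symm)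
    rw [← hu, ← hv]; exact h
  -- reversal identity
  have Hrev : ∀ (f : ℕ → ℝ) (k : ℕ), k ≤ n →
      ∑ j ∈ Finset.range k, f (n - 1 - j)
        = ∑ j ∈ Finset.range n, f j - ∑ j ∈ Finset.range (n - k), f j := by
    intro f k hk
    have h1 := Finset.sum_Ico_reflect f 0 (n := n - 1) (m := k) (by omega)
    have hn1 : n - 1 + 1 = n := by omega
    rw [hn1] at h1
    simp only [Nat.sub_zero] at h1
    rw [show Finset.Ico 0 k = Finset.range k from by ext j; simp] at h1
    rw [h1, Finset.sum_Ico_eq_sub f (by omega)]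
  -- reciprocals reversed: weak submajorization
  have R : ∀ k, k ≤ n → ∑ j ∈ Finset.range k, (a (n - 1 - j))⁻¹
      ≤ ∑ j ∈ Finset.range k, (b (n - 1 - j))⁻¹ := by
    intro k hk
    rw [← sub_nonneg, ← Finset.sum_sub_distrib]
    have hcongr : ∀ j ∈ Finset.range k,
        (b (n - 1 - j))⁻¹ - (a (n - 1 - j))⁻¹
          = (a (n - 1 - j) * b (n - 1 - j))⁻¹ * (a (n - 1 - j) - b (n - 1 - j)) := by
      intro j _
      exact inv_sub_inv'' (hapos (n - 1 - j)).ne' (hbpos (n - 1 - j)).ne'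
    rw [Finset.sum_congr rfl hcongr]
    apply abel_nonneg k (fun j => (a (n - 1 - j) * b (n - 1 - j))⁻¹)
      (fun j => a (n - 1 - j) - b (n - 1 - j))
    · intro i j hij hj
      have hij' : n - 1 - j ≤ n - 1 - i := by omega
      have hjn : n - 1 - i < n := by omega
      have h1 := hamono (n - 1 - j) (n - 1 - i) hij' hjn
      have h2 := hbmono (n - 1 - j) (n - 1 - i) hij' hjn
      exact inv_anti₀ (mul_pos (hapos _) (hbpos _))
        (mul_le_mul h1 h2 (hbpos _).le (hapos _).le)
    · intro i _
      exact (inv_pos.2 (mul_pos (hapos _) (hbpos _))).le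
    · intro k' hk'
      rw [Finset.sum_sub_distrib, Hrev a k' (by omega), Hrev b k' (by omega)]
      have := H1 (n - k') (by omega)
      linarith [H2]
  -- products: weak submajorization up to m
  have P : ∀ k, k ≤ m → ∑ j ∈ Finset.range k, a j * (a (n - 1 - j))⁻¹
      ≤ ∑ j ∈ Finset.range k, b j * (b (n - 1 - j))⁻¹ := by
    intro k hk
    have hkn : k ≤ n := le_trans hk hmn
    have step1 : ∑ j ∈ Finset.range k, a j * (a (n - 1 - j))⁻¹
        ≤ ∑ j ∈ Finset.range k, a j * (b (n - 1 - j))⁻¹ := by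
      rw [← sub_nonneg, ← Finset.sum_sub_distrib]
      have hcongr : ∀ j ∈ Finset.range k,
          a j * (b (n - 1 - j))⁻¹ - a j * (a (n - 1 - j))⁻¹
            = a j * ((b (n - 1 - j))⁻¹ - (a (n - 1 - j))⁻¹) := fun j _ => by ring
      rw [Finset.sum_congr rfl hcongr]
      apply abel_nonneg k a (fun j => (b (n - 1 - j))⁻¹ - (a (n - 1 - j))⁻¹)
      · intro i j hij hj; exact hamono i j hij (by omega)
      · intro i _; exact (hapos i).le
      · intro k' hk'
        rw [Finset.sum_sub_distrib, sub_nonneg]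
        exact R k' (by omega)
    have step2 : ∑ j ∈ Finset.range k, a j * (b (n - 1 - j))⁻¹
        ≤ ∑ j ∈ Finset.range k, b j * (b (n - 1 - j))⁻¹ := by
      rw [← sub_nonneg, ← Finset.sum_sub_distrib]
      have hcongr : ∀ j ∈ Finset.range k,
          b j * (b (n - 1 - j))⁻¹ - a j * (b (n - 1 - j))⁻¹
            = (b (n - 1 - j))⁻¹ * (b j - a j) := fun j _ => by ring
      rw [Finset.sum_congr rfl hcongr]
      apply abel_nonneg k (fun j => (b (n - 1 - j))⁻¹) (fun j => b j - a j)
      · intro i j hij hj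
        have hij' : n - 1 - j ≤ n - 1 - i := by omega
        have hjn : n - 1 - i < n := by omega
        have h2 := hbmono (n - 1 - j) (n - 1 - i) hij' hjn
        exact inv_anti₀ (hbpos _) h2
      · intro i _; exact (inv_pos.2 (hbpos _)).le
      · intro k' hk'
        rw [Finset.sum_sub_distrib, sub_nonneg]
        exact H1 k' (by omega)
    linarith
  -- z sequences and their monotonicity
  have hza_mono : ∀ i j, i ≤ j → j < m →
      a j * (a (n - 1 - j))⁻¹ ≤ a i * (a (n - 1 - i))⁻¹ := by
    intro i j hij hj
    have h1 := hamono i j hij (by omega)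
    have hij' : n - 1 - j ≤ n - 1 - i := by omega
    have h2 := hamono (n - 1 - j) (n - 1 - i) hij' (by omega)
    have h2' : (a (n - 1 - j))⁻¹ ≤ (a (n - 1 - i))⁻¹ := inv_anti₀ (hapos _) h2
    exact mul_le_mul h1 h2' (inv_pos.2 (hapos _)).le (hapos _).le
  have hzb_mono : ∀ i j, i ≤ j → j < m →
      b j * (b (n - 1 - j))⁻¹ ≤ b i * (b (n - 1 - i))⁻¹ := by
    intro i j hij hj
    have h1 := hbmono i j hij (by omega)
    have hij' : n - 1 - j ≤ n - 1 - i := by omega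
    have h2 := hbmono (n - 1 - j) (n - 1 - i) hij' (by omega)
    have h2' : (b (n - 1 - j))⁻¹ ≤ (b (n - 1 - i))⁻¹ := inv_anti₀ (hbpos _) h2
    exact mul_le_mul h1 h2' (inv_pos.2 (hbpos _)).le (hbpos _).le
  -- squares
  have S : ∑ j ∈ Finset.range m, (a j * (a (n - 1 - j))⁻¹) ^ 2
      ≤ ∑ j ∈ Finset.range m, (b j * (b (n - 1 - j))⁻¹) ^ 2 := by
    rw [← sub_nonneg, ← Finset.sum_sub_distrib]
    have hcongr : ∀ j ∈ Finset.range m,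
        (b j * (b (n - 1 - j))⁻¹) ^ 2 - (a j * (a (n - 1 - j))⁻¹) ^ 2
          = (b j * (b (n - 1 - j))⁻¹ + a j * (a (n - 1 - j))⁻¹)
            * (b j * (b (n - 1 - j))⁻¹ - a j * (a (n - 1 - j))⁻¹) := fun j _ => by ring
    rw [Finset.sum_congr rfl hcongr]
    apply abel_nonneg m _ _
    · intro i j hij hj
      exact add_le_add (hzb_mono i j hij hj) (hza_mono i j hij hj)
    · intro i _
      have := mul_pos (hapos i) (inv_pos.2 (hapos (n - 1 - i)))
      have := mul_pos (hbpos i) (inv_pos.2 (hbpos (n - 1 - i)))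
      positivity
    · intro k' hk'
      rw [Finset.sum_sub_distrib, sub_nonneg]
      exact P k' (by omega)
  -- finish
  unfold condNorm
  apply Real.sqrt_le_sqrt
  have hu : ∑ i, condVec u i ^ 2 = ∑ j ∈ Finset.range m, (a j * (a (n - 1 - j))⁻¹) ^ 2 := by
    rw [← Fin.sum_univ_eq_sum_range (fun j => (a j * (a (n - 1 - j))⁻¹) ^ 2) m]
    apply Finset.sum_congr rfl
    intro i _
    simp only [condVec, hds_u]
    rw [hag i.1 (i.2.trans_le hmn), hag (n - 1 - i.1) (by have := i.2; omega), div_eq_mul_inv]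
  have hv : ∑ i, condVec v i ^ 2 = ∑ j ∈ Finset.range m, (b j * (b (n - 1 - j))⁻¹) ^ 2 := by
    rw [← Fin.sum_univ_eq_sum_range (fun j => (b j * (b (n - 1 - j))⁻¹) ^ 2) m]
    apply Finset.sum_congr rfl
    intro i _
    simp only [condVec, hds_v]
    rw [hbg i.1 (i.2.trans_le hmn), hbg (n - 1 - i.1) (by have := i.2; omega), div_eq_mul_inv]
  rw [hu, hv]
  exact S
end

section
/- Let κ_{‖·‖}(u) = ‖(u↓ᵢ/u↓_{n−i+1})_{i=1}^{⌊n/2⌋}‖₂ on vectors u ∈ ℝⁿ with positive entries. Then κ_{‖·‖} is strictly Schur-convex on the positive orthant: if u, v have positive entries, u ≺ v, and u↓ ≠ v↓, then κ_{‖·‖}(u) < κ_{‖·‖}(v). -/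
open Finset

/-!
Sorted vectors with `a ≺ b` and `a ≠ b` are connected by a finite chain of Robin Hood transfers
(move `δ` from an entry `b j` to a smaller entry `b k`, `j < k`, keeping the vector sorted and
still majorizing `a`), each of which makes one more coordinate agree with `a`. So it suffices that
the sum of squared ratios `Σ (x_i / x_{n-1-i})²` strictly drops under one such transfer. If mass
leaves a numerator (or the middle entry) and arrives at a denominator (or the middle entry), every
ratio weakly shrinks and one strictly. If both entries are numerators, or both are denominators,
only two ratios move, in opposite directions, and the decrease wins because the donor is the
larger entry and is paired with the smaller partner.
-/

namespace Majorization

section Transfer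

variable {ι : Type*} [DecidableEq ι]

def transfer (b : ι → ℝ) (j k : ι) (δ : ℝ) : ι → ℝ :=
  b - Pi.single j δ + Pi.single k δ

variable {a b : ι → ℝ} {i j k : ι} {δ : ℝ}

lemma transfer_apply_left (hjk : j ≠ k) : transfer b j k δ j = b j - δ := by
  simp [transfer, hjk]

lemma transfer_apply_right (hjk : j ≠ k) : transfer b j k δ k = b k + δ := by
  simp [transfer, hjk.symm]

lemma transfer_apply_of_ne (hij : i ≠ j) (hik : i ≠ k) : transfer b j k δ i = b i := by
  simp [transfer, hij, hik]

lemma transfer_le_of_ne_right (hδ : 0 ≤ δ) (hik : i ≠ k) : transfer b j k δ i ≤ b i := by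
  simp only [transfer, Pi.add_apply, Pi.sub_apply, Pi.single_apply, hik, if_false]
  split_ifs <;> linarith

lemma le_transfer_of_ne_left (hδ : 0 ≤ δ) (hij : i ≠ j) : b i ≤ transfer b j k δ i := by
  simp only [transfer, Pi.add_apply, Pi.sub_apply, Pi.single_apply, hij, if_false]
  split_ifs <;> linarith

lemma transfer_pos (hb : ∀ i, 0 < b i) (hδ : 0 ≤ δ) (hj : 0 < b j - δ) (i : ι) :
    0 < transfer b j k δ i := by
  by_cases hij : i = j
  · subst hij
    simp only [transfer, Pi.add_apply, Pi.sub_apply, Pi.single_eq_same, Pi.single_apply]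
    split_ifs <;> linarith
  · exact (hb i).trans_le (le_transfer_of_ne_left hδ hij)

lemma sum_transfer (s : Finset ι) :
    ∑ i ∈ s, transfer b j k δ i =
      ∑ i ∈ s, b i - (if j ∈ s then δ else 0) + (if k ∈ s then δ else 0) := by
  simp [transfer, sum_add_distrib, sum_sub_distrib]

lemma card_ne_transfer_lt [Fintype ι] (hj : a j ≠ b j) (hk : a k ≠ b k)
    (hfix : transfer b j k δ j = a j ∨ transfer b j k δ k = a k) :
    #{i | a i ≠ transfer b j k δ i} < #{i | a i ≠ b i} := by
  apply card_lt_card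
  rw [ssubset_iff_of_subset]
  · rcases hfix with hfix | hfix
    · exact ⟨j, by simpa using hj, by simp [hfix]⟩
    · exact ⟨k, by simpa using hk, by simp [hfix]⟩
  · intro i
    simp only [mem_filter, mem_univ, true_and]
    intro hi
    by_cases hij : i = j
    · exact hij ▸ hj
    by_cases hik : i = k
    · exact hik ▸ hk
    rwa [transfer_apply_of_ne hij hik] at hi

/-- `a` squeezes the transferred vector from both sides on `[j, k]`, which keeps it sorted. -/
lemma antitone_transfer [LinearOrder ι] (ha : Antitone a) (hb : Antitone b) (hjk : j < k)
    (hδ : 0 ≤ δ) (hj : a j ≤ b j - δ) (hk : b k + δ ≤ a k)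
    (hmid : ∀ i, j < i → i < k → a i = b i) : Antitone (transfer b j k δ) := by
  set c := transfer b j k δ with hc
  have hc_left : ∀ i, j ≤ i → i < k → a i ≤ c i := by
    intro i hji hik
    rcases hji.eq_or_lt with rfl | hji
    · rw [hc, transfer_apply_left hjk.ne]; exact hj
    · rw [hc, transfer_apply_of_ne hji.ne' hik.ne, hmid i hji hik]
  have hc_right : ∀ i, j < i → i ≤ k → c i ≤ a i := by
    intro i hji hik
    rcases hik.eq_or_lt with rfl | hik
    · rw [hc, transfer_apply_right hjk.ne]; exact hk
    · rw [hc, transfer_apply_of_ne hji.ne' hik.ne, hmid i hji hik]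
  intro x y hxy
  rcases hxy.eq_or_lt with rfl | hxy
  · rfl
  by_cases hin : j ≤ x ∧ y ≤ k
  · exact (hc_right y (hin.1.trans_lt hxy) hin.2).trans
      ((ha hxy.le).trans (hc_left x hin.1 (hxy.trans_le hin.2)))
  by_cases hxj : x = j
  · subst hxj
    have hky : k < y := lt_of_not_ge fun h => hin ⟨le_rfl, h⟩
    calc c y ≤ b y := transfer_le_of_ne_right hδ hky.ne'
      _ ≤ b k := hb hky.le
      _ ≤ a x := by linarith [ha hjk.le]
      _ ≤ c x := hc_left x le_rfl hjk
  by_cases hyk : y = k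
  · subst hyk
    have hxj' : x < j := lt_of_not_ge fun h => hin ⟨h, le_rfl⟩
    calc c y ≤ a y := hc_right y hjk le_rfl
      _ ≤ b j := by linarith [ha hjk.le]
      _ ≤ b x := hb hxj'.le
      _ ≤ c x := le_transfer_of_ne_left hδ hxj
  calc c y ≤ b y := transfer_le_of_ne_right hδ hyk
    _ ≤ b x := hb hxy.le
    _ ≤ c x := le_transfer_of_ne_left hδ hxj

end Transfer

section PrefixSum

variable {n : ℕ}

def prefixSum (x : Fin n → ℝ) (m : ℕ) : ℝ :=
  ∑ i ∈ univ.filter (fun i : Fin n => (i : ℕ) < m), x i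

lemma prefixSum_succ (x : Fin n → ℝ) (i : Fin n) :
    prefixSum x (i + 1) = prefixSum x i + x i := by
  have hset : univ.filter (fun l : Fin n => (l : ℕ) < i + 1) =
      insert i (univ.filter (fun l : Fin n => (l : ℕ) < i)) := by
    ext l
    simp only [mem_filter, mem_univ, true_and, mem_insert, Fin.ext_iff]
    omega
  rw [prefixSum, prefixSum, hset, sum_insert (by simp), add_comm]

variable {a b : Fin n → ℝ}

lemma prefixSum_congr {m : ℕ} (h : ∀ i : Fin n, (i : ℕ) < m → a i = b i) :
    prefixSum a m = prefixSum b m :=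
  sum_congr rfl fun i hi => h i (mem_filter.1 hi).2

lemma exists_transfer_indices (hpre : ∀ m, prefixSum a m ≤ prefixSum b m)
    (hsum : ∑ i, a i = ∑ i, b i) (hne : a ≠ b) :
    ∃ j k, j < k ∧ a j < b j ∧ b k < a k ∧ ∀ i, j < i → i < k → a i = b i := by
  have hK : (univ.filter fun i => b i < a i).Nonempty := by
    by_contra hK
    refine hne (funext fun i => ?_)
    have hle : ∀ i ∈ univ, a i ≤ b i := fun i _ => not_lt.1 fun h => hK ⟨i, by simp [h]⟩
    exact (sum_eq_sum_iff_of_le hle).1 hsum i (mem_univ i)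
  obtain ⟨k, hk, hk_min⟩ := exists_min_image _ id hK
  replace hk : b k < a k := (mem_filter.1 hk).2
  have hle_k : ∀ i, i < k → a i ≤ b i :=
    fun i hik => not_lt.1 fun h => (hk_min i (by simp [h])).not_gt hik
  have hJ : (univ.filter fun i => i < k ∧ a i < b i).Nonempty := by
    by_contra hJ
    have heq : prefixSum a k = prefixSum b k := prefixSum_congr fun i hik =>
      (hle_k i hik).antisymm (not_lt.1 fun h => hJ ⟨i, mem_filter.2 ⟨mem_univ i, hik, h⟩⟩)
    have := hpre (k + 1)
    rw [prefixSum_succ, prefixSum_succ, heq] at this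
    linarith
  obtain ⟨j, hj, hj_max⟩ := exists_max_image _ id hJ
  obtain ⟨hjk, hj⟩ := (mem_filter.1 hj).2
  refine ⟨j, k, hjk, hj, hk, fun i hji hik => (hle_k i hik).antisymm (not_lt.1 fun h => ?_)⟩
  exact (hj_max i (by simp [hik, h])).not_gt hji

lemma prefixSum_le_prefixSum_transfer (hpre : ∀ m, prefixSum a m ≤ prefixSum b m)
    {j k : Fin n} {δ : ℝ} (hjk : j < k) (hj : a j ≤ b j - δ)
    (hmid : ∀ i, j < i → i < k → a i = b i) (m : ℕ) :
    prefixSum a m ≤ prefixSum (transfer b j k δ) m := by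
  have hgap : ∀ l, (j : ℕ) < l → l ≤ k → prefixSum a l + δ ≤ prefixSum b l := by
    intro l hjl hlk
    induction l, hjl using Nat.le_induction with
    | base => rw [prefixSum_succ, prefixSum_succ]; linarith [hpre j]
    | succ l hjl ih =>
      have hl : l < n := by omega
      have := hmid ⟨l, hl⟩ (Fin.lt_def.2 hjl) (Fin.lt_def.2 (show l < (k : ℕ) by omega))
      rw [show l = ((⟨l, hl⟩ : Fin n) : ℕ) from rfl, prefixSum_succ, prefixSum_succ]
      linarith [ih (by omega)]
  have hjk' : (j : ℕ) < k := hjk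
  have htr : prefixSum (transfer b j k δ) m =
      prefixSum b m - (if (j : ℕ) < m then δ else 0) + (if (k : ℕ) < m then δ else 0) := by
    simp only [prefixSum, sum_transfer, mem_filter, mem_univ, true_and]
  rw [htr]
  by_cases hjm : (j : ℕ) < m
  · by_cases hkm : (k : ℕ) < m
    · simp only [hjm, hkm, if_true]; linarith [hpre m]
    · simp only [hjm, hkm, if_true, if_false]; linarith [hgap m hjm (by omega)]
  · simp only [hjm, show ¬ (k : ℕ) < m by omega, if_false]; linarith [hpre m]

theorem lt_of_prefixSum_le (F : (Fin n → ℝ) → ℝ)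
    (hF : ∀ b : Fin n → ℝ, (∀ i, 0 < b i) → Antitone b → ∀ j k, j < k → ∀ δ, 0 < δ →
      b k + δ ≤ b j - δ → F (transfer b j k δ) < F b)
    (ha_pos : ∀ i, 0 < a i) (hb_pos : ∀ i, 0 < b i) (ha : Antitone a) (hb : Antitone b)
    (hpre : ∀ m, prefixSum a m ≤ prefixSum b m) (hsum : ∑ i, a i = ∑ i, b i) (hne : a ≠ b) :
    F a < F b := by
  induction hN : #{i | a i ≠ b i} using Nat.strong_induction_on generalizing b with
  | _ N ih =>
  obtain ⟨j, k, hjk, hj, hk, hmid⟩ := exists_transfer_indices hpre hsum hne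
  set δ := min (b j - a j) (a k - b k) with hδ_def
  have hδ : 0 < δ := lt_min (sub_pos.2 hj) (sub_pos.2 hk)
  have hδj : a j ≤ b j - δ := by linarith [min_le_left (b j - a j) (a k - b k)]
  have hδk : b k + δ ≤ a k := by linarith [min_le_right (b j - a j) (a k - b k)]
  have hFc := hF b hb_pos hb j k hjk δ hδ (by linarith [ha hjk.le])
  set c := transfer b j k δ with hc
  by_cases hac : a = c
  · rwa [hac]
  have hfix : c j = a j ∨ c k = a k := by
    rcases min_choice (b j - a j) (a k - b k) with h | h
    · left; rw [hc, transfer_apply_left hjk.ne, hδ_def, h]; ring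
    · right; rw [hc, transfer_apply_right hjk.ne, hδ_def, h]; ring
  have hc_sum : ∑ i, a i = ∑ i, c i := by simp [c, sum_transfer, hsum]
  refine lt_trans (ih _ (hN ▸ card_ne_transfer_lt hj.ne hk.ne' hfix) ?_
    (antitone_transfer ha hb hjk hδ.le hδj hδk hmid)
    (prefixSum_le_prefixSum_transfer hpre hjk hδj hmid) hc_sum hac rfl) hFc
  exact transfer_pos hb_pos hδ.le ((ha_pos j).trans_le hδj)

end PrefixSum

lemma sq_sub_div_add_sq_add_div_lt {β κ δ B C : ℝ} (hB : 0 < B) (hBC : B ≤ C) (hκ : 0 < κ)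
    (hδ : 0 < δ) (hgap : κ + δ ≤ β - δ) :
    ((β - δ) / B) ^ 2 + ((κ + δ) / C) ^ 2 < (β / B) ^ 2 + (κ / C) ^ 2 := by
  have hC : 0 < C := hB.trans_le hBC
  have hloss : (β / B) ^ 2 - ((β - δ) / B) ^ 2 = δ * (2 * β - δ) / B ^ 2 := by
    field_simp; ring
  have hgain : ((κ + δ) / C) ^ 2 - (κ / C) ^ 2 = δ * (2 * κ + δ) / C ^ 2 := by
    field_simp; ring
  have : δ * (2 * κ + δ) / C ^ 2 < δ * (2 * β - δ) / B ^ 2 :=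
    calc δ * (2 * κ + δ) / C ^ 2 < δ * (2 * β - δ) / C ^ 2 := by gcongr; linarith
      _ ≤ δ * (2 * β - δ) / B ^ 2 := by
        gcongr
        exact mul_nonneg hδ.le (by linarith)
  linarith

lemma sq_div_sub_add_sq_div_add_lt {β κ δ P Q : ℝ} (hP : 0 < P) (hPQ : P ≤ Q) (hκ : 0 < κ)
    (hδ : 0 < δ) (hgap : κ + δ ≤ β - δ) :
    (P / (β - δ)) ^ 2 + (Q / (κ + δ)) ^ 2 < (P / β) ^ 2 + (Q / κ) ^ 2 := by
  obtain ⟨y, rfl⟩ : ∃ y, β = y + δ := ⟨β - δ, by ring⟩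
  rw [add_sub_cancel_right] at hgap ⊢
  have hy : 0 < y := by linarith
  -- `x⁻² - (x + δ)⁻²` is a product of two positive decreasing factors
  have hdrop : ∀ x, 0 < x → 1 / x ^ 2 - 1 / (x + δ) ^ 2 =
      δ * (1 / (x * (x + δ)) * (1 / x + 1 / (x + δ))) := by
    intro x hx; field_simp; ring
  have hmono : 1 / y ^ 2 - 1 / (y + δ) ^ 2 < 1 / κ ^ 2 - 1 / (κ + δ) ^ 2 := by
    rw [hdrop y hy, hdrop κ hκ]
    gcongr <;> linarith
  have hnonneg : 0 ≤ 1 / y ^ 2 - 1 / (y + δ) ^ 2 := by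
    rw [sub_nonneg]; gcongr; linarith
  have hQ : 0 < Q := hP.trans_le hPQ
  have e : ∀ R x : ℝ, (R / x) ^ 2 = R ^ 2 * (1 / x ^ 2) := fun R x => by ring
  rw [e P, e P, e Q, e Q]
  linarith [mul_le_mul_of_nonneg_right (pow_le_pow_left₀ hP.le hPQ 2) hnonneg,
    mul_lt_mul_of_pos_left hmono (by positivity : 0 < Q ^ 2)]

lemma sum_lt_sum_of_eq_off_pair {ι : Type*} [Fintype ι] [DecidableEq ι] {f g : ι → ℝ}
    {p q : ι} (hpq : p ≠ q) (hoff : ∀ i, i ≠ p → i ≠ q → f i = g i)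
    (hlt : f p + f q < g p + g q) : ∑ i, f i < ∑ i, g i := by
  have := Fintype.sum_eq_add p q hpq (f := g - f) fun i hi => by simp [hoff i hi.1 hi.2]
  simp only [Pi.sub_apply, sum_sub_distrib] at this
  linarith

section SqRatioSum

variable {n : ℕ}

def lowIdx (i : Fin (n / 2)) : Fin n := ⟨i, i.2.trans_le (Nat.div_le_self n 2)⟩

def highIdx (i : Fin (n / 2)) : Fin n := ⟨n - 1 - i, by have := i.2; omega⟩

noncomputable def sqRatioSum (x : Fin n → ℝ) : ℝ :=
  ∑ i : Fin (n / 2), (x (lowIdx i) / x (highIdx i)) ^ 2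

lemma lowIdx_lt_highIdx (p q : Fin (n / 2)) : lowIdx p < highIdx q := by
  have := p.2; have := q.2
  rw [Fin.lt_def]; simp only [lowIdx, highIdx]; omega

lemma lowIdx_lt_lowIdx {p q : Fin (n / 2)} : lowIdx p < lowIdx q ↔ p < q := Iff.rfl

lemma highIdx_lt_highIdx {p q : Fin (n / 2)} : highIdx p < highIdx q ↔ q < p := by
  have := p.2; have := q.2
  rw [Fin.lt_def, Fin.lt_def]; simp only [highIdx]; omega

lemma lowIdx_injective : Function.Injective (lowIdx (n := n)) :=
  fun _ _ h => Fin.ext (congrArg Fin.val h :)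

lemma highIdx_injective : Function.Injective (highIdx (n := n)) := by
  intro p q h
  have := p.2; have := congrArg Fin.val h
  simp only [highIdx] at this
  exact Fin.ext (by omega)

lemma sqRatioSum_lt_sqRatioSum {x y : Fin n → ℝ} (hx : ∀ i, 0 < x i) (hy : ∀ i, 0 < y i)
    (hlow : ∀ i, x (lowIdx i) ≤ y (lowIdx i)) (hhigh : ∀ i, y (highIdx i) ≤ x (highIdx i))
    (hlt : ∃ i, x (lowIdx i) < y (lowIdx i) ∨ y (highIdx i) < x (highIdx i)) :
    sqRatioSum x < sqRatioSum y := by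
  have hnonneg : ∀ i, 0 ≤ x (lowIdx i) / x (highIdx i) := fun i => (div_pos (hx _) (hx _)).le
  have hle : ∀ i, x (lowIdx i) / x (highIdx i) ≤ y (lowIdx i) / y (highIdx i) := fun i =>
    div_le_div₀ (hy _).le (hlow i) (hy _) (hhigh i)
  obtain ⟨i, hi⟩ := hlt
  have hlt : x (lowIdx i) / x (highIdx i) < y (lowIdx i) / y (highIdx i) := by
    rcases hi with hi | hi
    · exact div_lt_div₀ hi (hhigh i) (hy _).le (hy _)
    · exact div_lt_div₀' (hlow i) hi (hy _) (hy _)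
  exact sum_lt_sum (fun i _ => pow_le_pow_left₀ (hnonneg i) (hle i) 2)
    ⟨i, mem_univ i, pow_lt_pow_left₀ hlt (hnonneg i) two_ne_zero⟩

lemma sqRatioSum_transfer_lowIdx_lt (hb_pos : ∀ i, 0 < b i) (hb : Antitone b)
    {p q : Fin (n / 2)} (hpq : p < q) (hδ : 0 < δ)
    (hgap : b (lowIdx q) + δ ≤ b (lowIdx p) - δ) :
    sqRatioSum (transfer b (lowIdx p) (lowIdx q) δ) < sqRatioSum b := by
  have hne : lowIdx p ≠ lowIdx q := lowIdx_injective.ne hpq.ne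
  have hhigh : ∀ i, transfer b (lowIdx p) (lowIdx q) δ (highIdx i) = b (highIdx i) := fun i =>
    transfer_apply_of_ne (lowIdx_lt_highIdx p i).ne' (lowIdx_lt_highIdx q i).ne'
  refine sum_lt_sum_of_eq_off_pair hpq.ne (fun i hip hiq => ?_) ?_
  · rw [hhigh, transfer_apply_of_ne (lowIdx_injective.ne hip) (lowIdx_injective.ne hiq)]
  · rw [hhigh, hhigh, transfer_apply_left hne, transfer_apply_right hne]
    exact sq_sub_div_add_sq_add_div_lt (hb_pos _) (hb (highIdx_lt_highIdx.2 hpq).le)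
      (hb_pos _) hδ hgap

lemma sqRatioSum_transfer_highIdx_lt (hb_pos : ∀ i, 0 < b i) (hb : Antitone b)
    {p q : Fin (n / 2)} (hqp : q < p) (hδ : 0 < δ)
    (hgap : b (highIdx q) + δ ≤ b (highIdx p) - δ) :
    sqRatioSum (transfer b (highIdx p) (highIdx q) δ) < sqRatioSum b := by
  have hne : highIdx p ≠ highIdx q := highIdx_injective.ne hqp.ne'
  have hlow : ∀ i, transfer b (highIdx p) (highIdx q) δ (lowIdx i) = b (lowIdx i) := fun i =>
    transfer_apply_of_ne (lowIdx_lt_highIdx i p).ne (lowIdx_lt_highIdx i q).ne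
  refine sum_lt_sum_of_eq_off_pair hqp.ne' (fun i hip hiq => ?_) ?_
  · rw [hlow, transfer_apply_of_ne (highIdx_injective.ne hip) (highIdx_injective.ne hiq)]
  · rw [hlow, hlow, transfer_apply_left hne, transfer_apply_right hne]
    exact sq_div_sub_add_sq_div_add_lt (hb_pos _) (hb (lowIdx_lt_lowIdx.2 hqp).le)
      (hb_pos _) hδ hgap

lemma sqRatioSum_transfer_lt (hb_pos : ∀ i, 0 < b i) (hb : Antitone b) {j k : Fin n}
    (hjk : j < k) (hδ : 0 < δ) (hgap : b k + δ ≤ b j - δ) :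
    sqRatioSum (transfer b j k δ) < sqRatioSum b := by
  have hjk' : (j : ℕ) < k := hjk
  have hk := k.2
  by_cases hkN : (k : ℕ) < n / 2
  · obtain ⟨p, rfl⟩ : ∃ p, lowIdx p = j := ⟨⟨j, by omega⟩, rfl⟩
    obtain ⟨q, rfl⟩ : ∃ q, lowIdx q = k := ⟨⟨k, hkN⟩, rfl⟩
    exact sqRatioSum_transfer_lowIdx_lt hb_pos hb hjk hδ hgap
  by_cases hjD : n - 1 - (j : ℕ) < n / 2
  · obtain ⟨p, rfl⟩ : ∃ p, highIdx p = j :=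
      ⟨⟨n - 1 - j, hjD⟩, Fin.ext (by simp only [highIdx]; omega)⟩
    obtain ⟨q, rfl⟩ : ∃ q, highIdx q = k :=
      ⟨⟨n - 1 - k, by omega⟩, Fin.ext (by simp only [highIdx]; omega)⟩
    exact sqRatioSum_transfer_highIdx_lt hb_pos hb (highIdx_lt_highIdx.1 hjk) hδ hgap
  refine sqRatioSum_lt_sqRatioSum (transfer_pos hb_pos hδ.le (by linarith [hb_pos k])) hb_pos
    (fun i => transfer_le_of_ne_right hδ.le ?_) (fun i => le_transfer_of_ne_left hδ.le ?_) ?_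
  · exact Fin.ne_of_val_ne (by simp only [lowIdx]; omega)
  · exact Fin.ne_of_val_ne (by simp only [highIdx]; omega)
  by_cases hjN : (j : ℕ) < n / 2
  · refine ⟨⟨j, hjN⟩, Or.inl ?_⟩
    rw [show lowIdx ⟨j, hjN⟩ = j from rfl, transfer_apply_left hjk.ne]
    linarith
  · refine ⟨⟨n - 1 - k, by omega⟩, Or.inr ?_⟩
    rw [show highIdx ⟨n - 1 - k, _⟩ = k from Fin.ext (by simp only [highIdx]; omega),
      transfer_apply_right hjk.ne]
    linarith

end SqRatioSum

end Majorization

lemma antitone_dsort {n : ℕ} (u : Fin n → ℝ) : Antitone (dsort u) := fun _ _ hxy => by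
  simpa [dsort] using Tuple.monotone_sort (fun i => -u i) hxy

lemma sum_dsort {n : ℕ} (u : Fin n → ℝ) : ∑ i, dsort u i = ∑ i, u i :=
  Equiv.sum_comp (Tuple.sort fun i => -u i) u

lemma condNorm_eq_sqrt_sqRatioSum {n : ℕ} (u : Fin n → ℝ) :
    condNorm u = Real.sqrt (Majorization.sqRatioSum (dsort u)) :=
  rfl

theorem stmt8 {n : ℕ} (u v : Fin n → ℝ)
    (hupos : ∀ i, 0 < u i) (hvpos : ∀ i, 0 < v i)
    (hmaj : Maj u v) (hne : dsort u ≠ dsort v) : condNorm u < condNorm v := by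
  rw [condNorm_eq_sqrt_sqRatioSum, condNorm_eq_sqrt_sqRatioSum]
  refine Real.sqrt_lt_sqrt (sum_nonneg fun _ _ => sq_nonneg _) ?_
  exact Majorization.lt_of_prefixSum_le Majorization.sqRatioSum
    (fun _ hb_pos hb _ _ hjk _ hδ hgap => Majorization.sqRatioSum_transfer_lt hb_pos hb hjk hδ hgap)
    (fun _ => hupos _) (fun _ => hvpos _) (antitone_dsort u) (antitone_dsort v) hmaj.1
    (by rw [sum_dsort, sum_dsort, hmaj.2]) hne
end

section
/- If vectors satisfy γ ≺ η in ℝᵏ and δ ≺ ν in ℝᵐ, then the concatenation (γ, δ) ≺ (η, ν) in ℝ^{k+m}; moreover, if additionally γ↓ ≠ η↓, then (γ,δ)↓ ≠ (η,ν)↓, i.e., the concatenated majorization is strict. -/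
open Finset

/-!
The sum of the `j` largest entries of `(γ, δ)` is the sum of the `a` largest entries of `γ` plus
the `b` largest entries of `δ` for some `a + b = j`, while any such pair of top sums is at most the
top-`j` sum of the concatenation; comparing `γ` with `η` and `δ` with `ν` gives the majorization.
For strictness, the number `a` of entries of `γ` among the `j` largest of `(γ, δ)` grows by at most
one with `j`, so it takes every value `c ≤ k`. If the concatenations had the same decreasing
rearrangement, the chain of inequalities at such a `j` would collapse and force the top-`c` sums of
`γ` and `η` to agree for every `c`, hence `γ↓ = η↓`.
-/

theorem Finset.sum_le_sum_of_card_eq_of_forall_le {ι M : Type*} [AddCommMonoid M] [LinearOrder M]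
    [IsOrderedAddMonoid M] {s t : Finset ι} {f : ι → M} (hcard : #s = #t)
    (h : ∀ a ∈ s, ∀ b ∈ t, f a ≤ f b) : ∑ a ∈ s, f a ≤ ∑ b ∈ t, f b := by
  rcases s.eq_empty_or_nonempty with rfl | hs
  · rw [card_empty, eq_comm, card_eq_zero] at hcard
    simp [hcard]
  · calc ∑ a ∈ s, f a ≤ #s • s.sup' hs f := sum_le_card_nsmul _ _ _ fun a ha => le_sup' f ha
      _ = #t • s.sup' hs f := by rw [hcard]
      _ ≤ ∑ b ∈ t, f b :=
        card_nsmul_le_sum _ _ _ fun b hb => sup'_le hs f fun a ha => h a ha b hb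

theorem Nat.exists_eq_of_le_of_succ_le {f : ℕ → ℕ} (h0 : f 0 = 0) (hsucc : ∀ j, f (j + 1) ≤ f j + 1)
    {c : ℕ} : ∀ {N : ℕ}, c ≤ f N → ∃ j, f j = c
  | 0, hc => ⟨0, by omega⟩
  | N + 1, hc => by
    rcases le_or_gt c (f N) with h | h
    · exact exists_eq_of_le_of_succ_le h0 hsucc h
    · exact ⟨N + 1, by have := hsucc N; omega⟩

theorem Finset.card_filter_mem_le_add_card_sdiff {ι κ : Type*} [Fintype ι] [DecidableEq ι]
    [DecidableEq κ] {g : ι → κ} (hg : Function.Injective g) (S T : Finset κ) :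
    #{i | g i ∈ T} ≤ #{i | g i ∈ S} + #(T \ S) :=
  calc #{i | g i ∈ T} ≤ #(({i | g i ∈ S} : Finset ι) ∪ ({i | g i ∈ T \ S} : Finset ι)) :=
        card_le_card fun i => by
          simp only [mem_union, mem_filter, mem_univ, true_and, mem_sdiff]
          tauto
    _ ≤ #{i | g i ∈ S} + #{i | g i ∈ T \ S} := card_union_le _ _
    _ ≤ #{i | g i ∈ S} + #(T \ S) := by
        gcongr
        exact card_le_card_of_injOn g (fun i hi => by simpa using hi) hg.injOn

noncomputable def topSum {n : ℕ} (u : Fin n → ℝ) (j : ℕ) : ℝ :=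
  ∑ i ∈ univ.filter (fun i : Fin n => (i : ℕ) < j), dsort u i

-- indices of the `j` largest entries of `u`, ties broken as in `dsort`
noncomputable def topSet {n : ℕ} (u : Fin n → ℝ) (j : ℕ) : Finset (Fin n) :=
  (univ.filter (fun i : Fin n => (i : ℕ) < j)).map (Tuple.sort (fun i => -u i)).toEmbedding

section TopSum

variable {n : ℕ} (u : Fin n → ℝ)

theorem dsort_antitone : Antitone (dsort u) := fun a b hab => by
  simpa [dsort] using Tuple.monotone_sort (fun i => -u i) hab

theorem dsort_sort_symm_apply (i : Fin n) : dsort u ((Tuple.sort fun i => -u i).symm i) = u i := by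
  simp [dsort]

theorem mem_topSet {i : Fin n} {j : ℕ} :
    i ∈ topSet u j ↔ ((Tuple.sort fun i => -u i).symm i : ℕ) < j := by
  simp [topSet]

theorem sum_topSet (j : ℕ) : ∑ i ∈ topSet u j, u i = topSum u j := by
  rw [topSet, sum_map]
  rfl

theorem card_topSet (j : ℕ) : #(topSet u j) = min n j := by
  rw [topSet, card_map, Fin.card_filter_val_lt]

theorem topSet_mono : Monotone (topSet u) := fun j j' h i => by
  simp only [mem_topSet]
  omega

theorem topSet_zero : topSet u 0 = ∅ := by
  ext i
  simp [mem_topSet]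

theorem topSet_self : topSet u n = univ := by
  ext i
  simp [mem_topSet]

theorem le_of_notMem_topSet {a b : Fin n} {j : ℕ} (ha : a ∉ topSet u j) (hb : b ∈ topSet u j) :
    u a ≤ u b := by
  rw [mem_topSet] at ha hb
  rw [← dsort_sort_symm_apply u a, ← dsort_sort_symm_apply u b]
  exact dsort_antitone u (Fin.le_def.2 (by omega))

theorem sum_le_topSum (S : Finset (Fin n)) : ∑ i ∈ S, u i ≤ topSum u #S := by
  -- exchange: `S \ T`, `T \ S` have equal size and entries outside `T` lie below those in `T`
  set T := topSet u #S
  have hcard : #T = #S := by rw [card_topSet, min_eq_right (by simpa using card_le_univ S)]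
  rw [← sum_topSet, ← sum_inter_add_sum_sdiff S T, ← sum_inter_add_sum_sdiff T S, inter_comm]
  gcongr 1
  refine sum_le_sum_of_card_eq_of_forall_le ?_ fun a ha b hb => ?_
  · exact card_sdiff_comm hcard.symm
  · exact le_of_notMem_topSet u (mem_sdiff.1 ha).2 (mem_sdiff.1 hb).1

theorem topSum_min (j : ℕ) : topSum u (min n j) = topSum u j := by
  unfold topSum
  congr 1
  ext i
  simp

theorem topSum_succ (i : Fin n) : topSum u (i + 1) = topSum u i + dsort u i := by
  have : univ.filter (fun x : Fin n => (x : ℕ) < i + 1)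
      = insert i (univ.filter fun x : Fin n => (x : ℕ) < i) := by
    ext x
    simp only [mem_filter, mem_univ, true_and, mem_insert, Fin.ext_iff]
    omega
  rw [topSum, topSum, this, sum_insert (by simp), add_comm]

theorem dsort_eq_of_forall_topSum_eq {v : Fin n → ℝ} (h : ∀ j, topSum u j = topSum v j) :
    dsort u = dsort v := by
  funext i
  linarith [topSum_succ u i, topSum_succ v i, h i, h (i + 1)]

end TopSum

section Append

variable {p q : ℕ}

theorem Fin.sum_eq_sum_filter_castAdd_add_sum_filter_natAdd {M : Type*} [AddCommMonoid M]
    (f : Fin (p + q) → M) (S : Finset (Fin (p + q))) :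
    ∑ i ∈ S, f i = ∑ i ∈ univ.filter (fun i => Fin.castAdd q i ∈ S), f (Fin.castAdd q i)
      + ∑ i ∈ univ.filter (fun i => Fin.natAdd p i ∈ S), f (Fin.natAdd p i) := by
  rw [sum_filter, sum_filter, ← Fin.sum_univ_add (fun i => if i ∈ S then f i else 0), ← sum_filter,
    filter_mem_eq_inter, univ_inter]

theorem Fin.card_eq_card_filter_castAdd_add_card_filter_natAdd (S : Finset (Fin (p + q))) :
    #S = #(univ.filter fun i => Fin.castAdd q i ∈ S)
      + #(univ.filter fun i => Fin.natAdd p i ∈ S) := by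
  simpa only [card_eq_sum_ones] using
    Fin.sum_eq_sum_filter_castAdd_add_sum_filter_natAdd (fun _ => 1) S

theorem Fin.natAdd_ne_castAdd (i : Fin q) (j : Fin p) : Fin.natAdd p i ≠ Fin.castAdd q j :=
  Fin.ne_of_val_ne (by simp only [Fin.val_natAdd, Fin.val_castAdd]; omega)

theorem Fin.filter_castAdd_mem_map_union_map (X : Finset (Fin p)) (Y : Finset (Fin q)) :
    univ.filter (fun i => Fin.castAdd q i ∈ X.map (Fin.castAddEmb q) ∪ Y.map (Fin.natAddEmb p))
      = X := by
  ext i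
  simp [Fin.natAdd_ne_castAdd]

theorem Fin.filter_natAdd_mem_map_union_map (X : Finset (Fin p)) (Y : Finset (Fin q)) :
    univ.filter (fun i => Fin.natAdd p i ∈ X.map (Fin.castAddEmb q) ∪ Y.map (Fin.natAddEmb p))
      = Y := by
  ext i
  simp [(Fin.natAdd_ne_castAdd _ _).symm]

variable (η : Fin p → ℝ) (ν : Fin q → ℝ)

theorem sum_append_eq_sum_filter_castAdd_add_sum_filter_natAdd (S : Finset (Fin (p + q))) :
    ∑ i ∈ S, Fin.append η ν i = ∑ i ∈ univ.filter (fun i => Fin.castAdd q i ∈ S), η i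
      + ∑ i ∈ univ.filter (fun i => Fin.natAdd p i ∈ S), ν i := by
  simp only [Fin.sum_eq_sum_filter_castAdd_add_sum_filter_natAdd _ S, Fin.append_left,
    Fin.append_right]

theorem topSum_add_topSum_le_topSum_append {a b : ℕ} (ha : a ≤ p) (hb : b ≤ q) :
    topSum η a + topSum ν b ≤ topSum (Fin.append η ν) (a + b) := by
  set S := (topSet η a).map (Fin.castAddEmb q) ∪ (topSet ν b).map (Fin.natAddEmb p)
  have hcard : #S = a + b := by
    rw [Fin.card_eq_card_filter_castAdd_add_card_filter_natAdd,
      Fin.filter_castAdd_mem_map_union_map, Fin.filter_natAdd_mem_map_union_map, card_topSet,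
      card_topSet, min_eq_right ha, min_eq_right hb]
  calc topSum η a + topSum ν b = ∑ i ∈ S, Fin.append η ν i := by
        rw [sum_append_eq_sum_filter_castAdd_add_sum_filter_natAdd,
          Fin.filter_castAdd_mem_map_union_map, Fin.filter_natAdd_mem_map_union_map, sum_topSet,
          sum_topSet]
    _ ≤ topSum (Fin.append η ν) (a + b) := hcard ▸ sum_le_topSum _ S

noncomputable def numLeftInTop (j : ℕ) : ℕ :=
  #(univ.filter fun i => Fin.castAdd q i ∈ topSet (Fin.append η ν) j)

theorem numLeftInTop_le (j : ℕ) : numLeftInTop η ν j ≤ p :=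
  (card_le_univ _).trans_eq (Fintype.card_fin p)

theorem exists_topSum_append_eq (j : ℕ) : ∃ b ≤ q, numLeftInTop η ν j + b = min (p + q) j ∧
    topSum (Fin.append η ν) j = topSum η (numLeftInTop η ν j) + topSum ν b := by
  set T := topSet (Fin.append η ν) j
  set B := univ.filter fun i => Fin.natAdd p i ∈ T
  have hcard : numLeftInTop η ν j + #B = min (p + q) j := by
    rw [numLeftInTop, ← Fin.card_eq_card_filter_castAdd_add_card_filter_natAdd, card_topSet]
  have hB : #B ≤ q := by simpa using card_le_univ B
  refine ⟨#B, hB, hcard, le_antisymm ?_ ?_⟩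
  · rw [← sum_topSet, sum_append_eq_sum_filter_castAdd_add_sum_filter_natAdd]
    exact add_le_add (sum_le_topSum η _) (sum_le_topSum ν B)
  · calc topSum η (numLeftInTop η ν j) + topSum ν #B
        ≤ topSum (Fin.append η ν) (min (p + q) j) :=
          hcard ▸ topSum_add_topSum_le_topSum_append η ν (numLeftInTop_le η ν j) hB
      _ = topSum (Fin.append η ν) j := topSum_min _ j

theorem numLeftInTop_zero : numLeftInTop η ν 0 = 0 := by
  simp [numLeftInTop, topSet_zero]

theorem numLeftInTop_add : numLeftInTop η ν (p + q) = p := by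
  simp [numLeftInTop, topSet_self]

theorem numLeftInTop_succ_le (j : ℕ) : numLeftInTop η ν (j + 1) ≤ numLeftInTop η ν j + 1 := by
  have hsub := topSet_mono (Fin.append η ν) j.le_succ
  have : #(topSet (Fin.append η ν) (j + 1) \ topSet (Fin.append η ν) j) ≤ 1 := by
    rw [card_sdiff_of_subset hsub, card_topSet, card_topSet]
    omega
  exact (card_filter_mem_le_add_card_sdiff (Fin.castAdd_injective p q)
    (topSet (Fin.append η ν) j) _).trans (by rw [numLeftInTop]; omega)

theorem exists_numLeftInTop_eq {c : ℕ} (hc : c ≤ p) : ∃ j, numLeftInTop η ν j = c :=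
  Nat.exists_eq_of_le_of_succ_le (numLeftInTop_zero η ν) (numLeftInTop_succ_le η ν)
    (N := p + q) (by rwa [numLeftInTop_add])

end Append

namespace Maj

variable {p q : ℕ} {γ η : Fin p → ℝ} {δ ν : Fin q → ℝ}

theorem topSum_le {n : ℕ} {u v : Fin n → ℝ} (h : Maj u v) (j : ℕ) : topSum u j ≤ topSum v j :=
  h.1 j

theorem append (h₁ : Maj γ η) (h₂ : Maj δ ν) : Maj (Fin.append γ δ) (Fin.append η ν) := by
  refine ⟨fun j => ?_, by simp [Fin.sum_univ_add, h₁.2, h₂.2]⟩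
  obtain ⟨b, hb, hcard, hsum⟩ := exists_topSum_append_eq γ δ j
  calc topSum (Fin.append γ δ) j = topSum γ (numLeftInTop γ δ j) + topSum δ b := hsum
    _ ≤ topSum η (numLeftInTop γ δ j) + topSum ν b := add_le_add (h₁.topSum_le _) (h₂.topSum_le _)
    _ ≤ topSum (Fin.append η ν) (numLeftInTop γ δ j + b) :=
      topSum_add_topSum_le_topSum_append η ν (numLeftInTop_le γ δ j) hb
    _ = topSum (Fin.append η ν) j := by rw [hcard, topSum_min]

theorem dsort_eq_of_dsort_append_eq (h₁ : Maj γ η) (h₂ : Maj δ ν)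
    (h : dsort (Fin.append γ δ) = dsort (Fin.append η ν)) : dsort γ = dsort η := by
  refine dsort_eq_of_forall_topSum_eq γ fun c => ?_
  rw [← topSum_min γ, ← topSum_min η]
  obtain ⟨j, hj⟩ := exists_numLeftInTop_eq γ δ (min_le_left p c)
  rw [← hj]
  obtain ⟨b, hb, hcard, hsum⟩ := exists_topSum_append_eq γ δ j
  have hη := topSum_add_topSum_le_topSum_append η ν (numLeftInTop_le γ δ j) hb
  have hT : topSum (Fin.append γ δ) j = topSum (Fin.append η ν) j := by simp only [topSum, h]
  rw [hcard, topSum_min, ← hT, hsum] at hη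
  linarith [h₁.topSum_le (numLeftInTop γ δ j), h₂.topSum_le b]

end Maj

theorem stmt16 {k m : ℕ} (γ η : Fin k → ℝ) (δ ν : Fin m → ℝ)
    (h1 : Maj γ η) (h2 : Maj δ ν) :
    Maj (Fin.append γ δ) (Fin.append η ν) ∧
      (dsort γ ≠ dsort η → dsort (Fin.append γ δ) ≠ dsort (Fin.append η ν)) :=
  ⟨h1.append h2, fun hne h => hne (h1.dsort_eq_of_dsort_append_eq h2 h)⟩
end
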